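/- For every regular function f : SL(2,ℂ) → ℂ satisfying f(gxg⁻¹) = f(x) for all g, x ∈ SL(2,ℂ), there exists a unique polynomial p ∈ ℂ[t] in one variable such that f(x) = p(tr(x)) for all x ∈ SL(2,ℂ). -/
import Mathlib


open Matrix

noncomputable section

abbrev SL2 : Type := Matrix.SpecialLinearGroup (Fin 2) ℂ

/-- A function `f : SL(2,ℂ) → ℂ` is regular if it is given by a polynomial
in the four matrix entries. -/
def IsRegularFn (f : SL2 → ℂ) : Prop :=
  ∃ P : MvPolynomial (Fin 4) ℂ,
    ∀ A : SL2, f A = MvPolynomial.eval ![A.1 0 0, A.1 0 1, A.1 1 0, A.1 1 1] P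

def cpn (t : ℂ) : SL2 := ⟨!![t, -1; 1, 0], by simp [Matrix.det_fin_two_of]⟩

lemma cpn_trace (t : ℂ) : Matrix.trace ((cpn t : Matrix (Fin 2) (Fin 2) ℂ)) = t := by
  simp [cpn, Matrix.trace_fin_two]

lemma eval_aeval (P : MvPolynomial (Fin 4) ℂ) (v : Fin 4 → Polynomial ℂ) (s : ℂ) :
    (MvPolynomial.aeval v P).eval s = MvPolynomial.eval (fun i => (v i).eval s) P := by
  induction P using MvPolynomial.induction_on with
  | C a => simp
  | add p q hp hq => simp [hp, hq]
  | mul_X p i hp => simp [hp]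

lemma conj_of (x : SL2) (M : Matrix (Fin 2) (Fin 2) ℂ) (hM : M.det ≠ 0)
    (hcomm : (x : Matrix (Fin 2) (Fin 2) ℂ) * M = M * (cpn (Matrix.trace (x : Matrix (Fin 2) (Fin 2) ℂ)) : Matrix (Fin 2) (Fin 2) ℂ)) :
    ∃ g : SL2, x = g * cpn (Matrix.trace (x : Matrix (Fin 2) (Fin 2) ℂ)) * g⁻¹ := by
  obtain ⟨l, hl⟩ := IsAlgClosed.exists_pow_nat_eq (k := ℂ) (M.det)⁻¹ (n := 2) (by norm_num)
  have hdet : (l • M).det = 1 := by rw [Matrix.det_smul]; simp [hl, inv_mul_cancel₀ hM]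
  set g : SL2 := ⟨l • M, hdet⟩ with hg
  have key : x * g = g * cpn (Matrix.trace (x : Matrix (Fin 2) (Fin 2) ℂ)) := by
    apply Subtype.coe_injective
    show (x : Matrix (Fin 2) (Fin 2) ℂ) * (l • M) = (l • M) * (cpn _ : Matrix (Fin 2) (Fin 2) ℂ)
    rw [Matrix.mul_smul, Matrix.smul_mul, hcomm]
  exact ⟨g, by rw [eq_mul_inv_iff_mul_eq]; exact key⟩

lemma exists_conj (x : SL2)
    (hx : x.1 0 1 ≠ 0 ∨ x.1 1 0 ≠ 0 ∨ x.1 0 0 ≠ x.1 1 1) :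
    ∃ g : SL2, x = g * cpn (Matrix.trace (x : Matrix (Fin 2) (Fin 2) ℂ)) * g⁻¹ := by
  set a := x.1 0 0 with ha
  set b := x.1 0 1 with hb
  set c := x.1 1 0 with hc
  set d := x.1 1 1 with hd
  have hdet : a * d - b * c = 1 := by
    have := x.2
    rwa [Matrix.det_fin_two] at this
  have hx1 : (x : Matrix (Fin 2) (Fin 2) ℂ) = !![a, b; c, d] := Matrix.eta_fin_two _
  have htr : Matrix.trace (x : Matrix (Fin 2) (Fin 2) ℂ) = a + d := Matrix.trace_fin_two _
  have hcomm : ∀ u v : ℂ, (x : Matrix (Fin 2) (Fin 2) ℂ) * !![-(a*u+b*v), u; -(c*u+d*v), v]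
      = !![-(a*u+b*v), u; -(c*u+d*v), v] * (cpn (Matrix.trace (x : Matrix (Fin 2) (Fin 2) ℂ)) : Matrix (Fin 2) (Fin 2) ℂ) := by
    intro u v
    rw [htr, hx1]
    show _ = _ * !![a+d, -1; 1, 0]
    ext i j
    fin_cases i <;> fin_cases j <;>
      simp [Matrix.mul_apply, Fin.sum_univ_two] <;>
      first
        | ring1
        | linear_combination u * hdet
        | linear_combination v * hdet
        | linear_combination (u + v) * hdet
  by_cases hB : b ≠ 0
  · exact conj_of x !![-(a*0+b*1), 0; -(c*0+d*1), 1]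
      (by simp [Matrix.det_fin_two_of]; simpa using hB) (hcomm 0 1)
  by_cases hC : c ≠ 0
  · exact conj_of x !![-(a*1+b*0), 1; -(c*1+d*0), 0]
      (by simp [Matrix.det_fin_two_of]; simpa using hC) (hcomm 1 0)
  push_neg at hB hC
  have hAD : a ≠ d := by tauto
  exact conj_of x !![-(a*1+b*1), 1; -(c*1+d*1), 1]
    (by
      simp only [Matrix.det_fin_two_of]
      intro h
      exact hAD (by linear_combination -h - hB + hC)) (hcomm 1 1)

/-- Every conjugation-invariant regular function on SL(2,ℂ) is, in a unique way,
a polynomial in the trace. -/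
theorem class_function_is_polynomial_in_trace (f : SL2 → ℂ) (hf : IsRegularFn f)
    (hinv : ∀ g x : SL2, f (g * x * g⁻¹) = f x) :
    ∃! p : Polynomial ℂ,
      ∀ x : SL2, f x = Polynomial.eval (Matrix.trace (x : Matrix (Fin 2) (Fin 2) ℂ)) p := by
  obtain ⟨P, hP⟩ := hf
  set q : Polynomial ℂ := MvPolynomial.aeval ![Polynomial.X, -1, 1, 0] P with hq
  have hcpn : ∀ t : ℂ, f (cpn t) = q.eval t := by
    intro t
    rw [hP, hq, eval_aeval]
    have hv : ![(cpn t).1 0 0, (cpn t).1 0 1, (cpn t).1 1 0, (cpn t).1 1 1]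
        = (fun i => Polynomial.eval t (![Polynomial.X, -1, 1, 0] i)) := by
      funext i; fin_cases i <;> simp [cpn]
    rw [hv]
  -- nonscalar values
  have hns : ∀ x : SL2, (x.1 0 1 ≠ 0 ∨ x.1 1 0 ≠ 0 ∨ x.1 0 0 ≠ x.1 1 1) →
      f x = q.eval (Matrix.trace (x : Matrix (Fin 2) (Fin 2) ℂ)) := by
    intro x hx
    obtain ⟨g, hg⟩ := exists_conj x hx
    conv_lhs => rw [hg]
    rw [hinv, hcpn]
  -- scalar values, handled by a limiting polynomial argument
  have hsc : ∀ e : ℂ, e * e = 1 → ∀ x : SL2, (x : Matrix (Fin 2) (Fin 2) ℂ) = !![e, 0; 0, e] →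
      f x = q.eval (Matrix.trace (x : Matrix (Fin 2) (Fin 2) ℂ)) := by
    intro e he x hx
    set r : Polynomial ℂ := MvPolynomial.aeval ![Polynomial.C e, Polynomial.X, 0, Polynomial.C e] P with hr
    have hu : ∀ s : ℂ, s ≠ 0 → r.eval s = q.eval (2 * e) := by
      intro s hs
      have hdet : (!![e, s; 0, e] : Matrix (Fin 2) (Fin 2) ℂ).det = 1 := by
        simp [Matrix.det_fin_two_of, he]
      set u : SL2 := ⟨!![e, s; 0, e], hdet⟩ with hu
      have h1 : f u = q.eval (Matrix.trace (u : Matrix (Fin 2) (Fin 2) ℂ)) := by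
        apply hns
        left
        simpa [hu] using hs
      have h2 : Matrix.trace (u : Matrix (Fin 2) (Fin 2) ℂ) = 2 * e := by
        simp [hu, Matrix.trace_fin_two]; ring
      have h3 : f u = r.eval s := by
        rw [hP, hr, eval_aeval]
        have hv : ![u.1 0 0, u.1 0 1, u.1 1 0, u.1 1 1]
            = (fun i => Polynomial.eval s (![Polynomial.C e, Polynomial.X, 0, Polynomial.C e] i)) := by
          funext i; fin_cases i <;> simp [hu]
        rw [hv]
      rw [← h3, h1, h2]
    have hr0 : r - Polynomial.C (q.eval (2 * e)) = 0 := by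
      apply Polynomial.eq_zero_of_infinite_isRoot
      apply Set.Infinite.mono (s := {s : ℂ | s ≠ 0})
      · intro s hs
        simp [Polynomial.IsRoot, hu s hs]
      · have : ({s : ℂ | s ≠ 0}) = ({0}ᶜ : Set ℂ) := by ext; simp
        rw [this]
        exact (Set.finite_singleton 0).infinite_compl
    have hre : r.eval 0 = q.eval (2 * e) := by
      have := congrArg (Polynomial.eval (0 : ℂ)) hr0
      simpa [sub_eq_zero] using this
    have htr : Matrix.trace (x : Matrix (Fin 2) (Fin 2) ℂ) = 2 * e := by
      rw [hx]; simp [Matrix.trace_fin_two]; ring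
    have hfx : f x = r.eval 0 := by
      rw [hP, hr, eval_aeval]
      have hv : ![x.1 0 0, x.1 0 1, x.1 1 0, x.1 1 1]
          = (fun i => Polynomial.eval (0:ℂ) (![Polynomial.C e, Polynomial.X, 0, Polynomial.C e] i)) := by
        funext i; fin_cases i <;> simp [hx]
      rw [hv]
    rw [hfx, hre, htr]
  have hmain : ∀ x : SL2, f x = q.eval (Matrix.trace (x : Matrix (Fin 2) (Fin 2) ℂ)) := by
    intro x
    by_cases hx : (x.1 0 1 ≠ 0 ∨ x.1 1 0 ≠ 0 ∨ x.1 0 0 ≠ x.1 1 1)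
    · exact hns x hx
    · push_neg at hx
      obtain ⟨h1, h2, h3⟩ := hx
      have hdet : x.1 0 0 * x.1 1 1 - x.1 0 1 * x.1 1 0 = 1 := by
        have := x.2
        rwa [Matrix.det_fin_two] at this
      have he : x.1 0 0 * x.1 0 0 = 1 := by
        rw [h1] at hdet
        rw [← h3] at hdet
        linear_combination hdet
      apply hsc (x.1 0 0) he
      rw [Matrix.eta_fin_two (x : Matrix (Fin 2) (Fin 2) ℂ), h1, h2, ← h3]
      simp
  refine ⟨q, hmain, ?_⟩
  intro p hp
  apply Polynomial.funext
  intro t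
  have h1 := hp (cpn t)
  rw [hcpn t, cpn_trace] at h1
  exact h1.symm

end
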